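/- Let A be a Weil algebra of order ℓ and width m ≤ n, and fix a surjective ℝ-algebra homomorphism α : ℝ_n^ℓ → A, where ℝ_n^ℓ = ℝ[x₁,…,x_n]/(x₁,…,x_n)^{ℓ+1}. Then every surjective ℝ-algebra homomorphism β : ℝ_n^ℓ → A factors as β = α ∘ g for some ℝ-algebra automorphism g of ℝ_n^ℓ. -/

import Mathlib

/-!
Write `𝔪` for the ideal of `ℝ_n^ℓ` generated by the `xᵢ`; it is nilpotent and `ℝ_n^ℓ = ℝ ⊕ 𝔪`.
Hence for every surjection `φ : ℝ_n^ℓ → A`, `φ(𝔪)` is the nilradical of `A`, so `α` and `β`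
have the same image of `𝔪` (and of `𝔪²`), and `ker α ⊆ 𝔪`. Lift each `β(xᵢ)` along `α` to
`vᵢ ∈ 𝔪`; the `vᵢ` together with `ker α` span `𝔪` modulo `𝔪²`, and since `𝔪/𝔪²` has dimension at
most `n`, adding suitable elements of `ker α` to the `vᵢ` gives `bᵢ` spanning `𝔪/𝔪²` alone. The
endomorphism `g : xᵢ ↦ bᵢ` of `ℝ_n^ℓ` then satisfies `α ∘ g = β`; it is surjective by a
Nakayama-type argument for the nilpotent ideal `𝔪`, hence bijective by finite dimensionality.
-/

open IsLocalRing

/-- The truncated polynomial algebra `ℝ_n^ℓ = ℝ[x₁,…,x_n]/(x₁,…,x_n)^{ℓ+1}`. -/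
abbrev Rnl (n ℓ : ℕ) : Type :=
  MvPolynomial (Fin n) ℝ ⧸
    ((Ideal.span (Set.range (MvPolynomial.X : Fin n → MvPolynomial (Fin n) ℝ))) ^ (ℓ + 1))

section LinearAlgebra

open Submodule Module Set

variable {k V ι : Type*} [Field k] [AddCommGroup V] [Module k V]

theorem Submodule.span_range_add_sup_eq {P : Submodule k V} {v w : ι → V} (hw : ∀ i, w i ∈ P) :
    span k (range (v + w)) ⊔ P = span k (range v) ⊔ P := by
  have key : ∀ u w : ι → V, (∀ i, w i ∈ P) → span k (range (u + w)) ⊔ P ≤ span k (range u) ⊔ P :=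
    fun u w hw => sup_le (span_le.2 <| range_subset_iff.2 fun i =>
      add_mem (mem_sup_left (subset_span ⟨i, rfl⟩)) (mem_sup_right (hw i))) le_sup_right
  refine le_antisymm (key v w hw) ?_
  simpa using key (v + w) (-w) fun i => neg_mem (hw i)

theorem Submodule.span_range_lt_span_range_add_single [DecidableEq ι] {v : ι → V} {i : ι}
    (hi : v i ∈ span k (v '' (univ \ {i}))) {c : V} (hc : c ∉ span k (range v)) :
    span k (range v) < span k (range (v + (Pi.single i c : ι → V))) := by
  have hle : span k (range v) ≤ span k (range (v + (Pi.single i c : ι → V))) := by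
    refine span_le.2 <| range_subset_iff.2 fun j => ?_
    by_cases hj : j = i
    · subst hj
      refine span_mono ?_ hi
      rintro _ ⟨l, ⟨-, hl⟩, rfl⟩
      exact ⟨l, by simp [show l ≠ j from hl]⟩
    · exact subset_span ⟨j, by simp [hj]⟩
  refine lt_of_le_of_ne hle fun h => hc ?_
  rw [h]
  simpa using sub_mem (subset_span (mem_range_self (f := v + (Pi.single i c : ι → V)) i))
    (hle (subset_span (mem_range_self i)))

/-- Each step adds a vector of `P` to a redundant member of the family, which enlarges its span. -/
theorem Submodule.exists_span_range_add_eq [Fintype ι] {M P : Submodule k V}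
    [FiniteDimensional k M]
    (hcard : finrank k M ≤ Fintype.card ι) {v : ι → V} (hv : span k (range v) ⊔ P = M) :
    ∃ w : ι → V, (∀ i, w i ∈ P) ∧ span k (range (v + w)) = M := by
  classical
  obtain ⟨d, hd⟩ : ∃ d, finrank k M - finrank k (span k (range v)) ≤ d := ⟨_, le_rfl⟩
  induction d generalizing v with
  | zero =>
    have hle : span k (range v) ≤ M := hv ▸ le_sup_left
    have heq : span k (range v) = M := eq_of_le_of_finrank_le hle
      (by omega : finrank k M ≤ finrank k (span k (range v)))
    exact ⟨0, fun _ => P.zero_mem, by simpa using heq⟩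
  | succ d ih =>
    have hle : span k (range v) ≤ M := hv ▸ le_sup_left
    by_cases htop : span k (range v) = M
    · exact ⟨0, fun _ => P.zero_mem, by simpa using htop⟩
    obtain ⟨c, hcP, hc⟩ : ∃ c ∈ P, c ∉ span k (range v) :=
      SetLike.not_le_iff_exists.1 fun h => htop (by rwa [sup_eq_left.2 h] at hv)
    obtain ⟨i, hi⟩ : ∃ i, v i ∈ span k (v '' (univ \ {i})) := by
      by_contra! h
      have hli := linearIndependent_iff_notMem_span.2 h
      exact htop <| eq_of_le_of_finrank_le hle <| by
        rw [finrank_span_eq_card hli]; exact hcard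
    have hv' : span k (range (v + (Pi.single i c : ι → V))) ⊔ P = M := by
      rw [span_range_add_sup_eq fun j => ?_, hv]
      by_cases hj : j = i
      · subst hj; simpa using hcP
      · simp [hj]
    have hlt := span_range_lt_span_range_add_single hi hc
    have hle' : span k (range (v + (Pi.single i c : ι → V))) ≤ M := hv' ▸ le_sup_left
    have := Submodule.finiteDimensional_of_le hle'
    have hgrow := finrank_lt_finrank_of_lt hlt
    have hbound := finrank_mono hle'
    obtain ⟨w, hwP, hw⟩ := ih hv' (by omega)
    refine ⟨Pi.single i c + w, fun j => add_mem ?_ (hwP j), by rwa [← add_assoc]⟩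
    by_cases hj : j = i
    · subst hj; simpa using hcP
    · simp [hj]

theorem Submodule.exists_le_span_range_add_sup [Fintype ι] {M N P : Submodule k V}
    [FiniteDimensional k M] (hPM : P ≤ M) {u v : ι → V} (hu : M ≤ span k (range u) ⊔ N)
    (hvM : ∀ i, v i ∈ M) (hv : M ≤ span k (range v) ⊔ N ⊔ P) :
    ∃ w : ι → V, (∀ i, w i ∈ P) ∧ M ≤ span k (range (v + w)) ⊔ N := by
  have hmap_span : ∀ x : ι → V, (span k (range x)).map N.mkQ = span k (range (N.mkQ ∘ x)) :=
    fun x => by rw [map_span, range_comp]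
  have hcard : finrank k (M.map N.mkQ) ≤ Fintype.card ι := by
    have hle : M.map N.mkQ ≤ span k (range (N.mkQ ∘ u)) := by
      simpa [map_sup, hmap_span] using map_mono (f := N.mkQ) hu
    have := FiniteDimensional.span_of_finite k (finite_range (N.mkQ ∘ u))
    exact (finrank_mono hle).trans (finrank_range_le_card _)
  have hv' : span k (range (N.mkQ ∘ v)) ⊔ P.map N.mkQ = M.map N.mkQ := by
    refine le_antisymm (sup_le ?_ (map_mono hPM)) ?_
    · rw [← hmap_span]
      exact map_mono (span_le.2 (range_subset_iff.2 hvM))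
    · simpa [map_sup, hmap_span] using map_mono (f := N.mkQ) hv
  obtain ⟨w', hw'P, hw'⟩ := exists_span_range_add_eq hcard hv'
  choose w hwP hww' using hw'P
  refine ⟨w, hwP, ?_⟩
  have : (span k (range (v + w))).map N.mkQ = M.map N.mkQ := by
    rw [hmap_span, ← hw']
    congr 2
    ext i
    simp [← hww']
  rw [sup_comm, ← comap_map_mkQ, this, comap_map_mkQ]
  exact le_sup_right

end LinearAlgebra

section Nakayama

open Submodule

variable {k R : Type*} [CommRing k] [CommRing R] [Algebra k R]

theorem Subalgebra.pow_succ_le_sup_pow_succ (T : Subalgebra k R) {I : Ideal R}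
    (hI : I.restrictScalars k ≤ Subalgebra.toSubmodule T ⊔ (I ^ 2).restrictScalars k) {j : ℕ}
    (hj : (I ^ j).restrictScalars k ≤
      Subalgebra.toSubmodule T ⊔ (I ^ (j + 1)).restrictScalars k) :
    (I ^ (j + 1)).restrictScalars k ≤
      Subalgebra.toSubmodule T ⊔ (I ^ (j + 2)).restrictScalars k := by
  intro z hz
  rw [restrictScalars_mem, pow_succ'] at hz
  refine Submodule.mul_induction_on hz (fun x hx y hy => ?_) fun _ _ => add_mem
  obtain ⟨t, ht, m, hm, rfl⟩ := mem_sup.1 (hI hx)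
  obtain ⟨s, hs, m', hm', rfl⟩ := mem_sup.1 (hj hy)
  have htI : t ∈ I := by simpa using sub_mem hx (Ideal.pow_le_self two_ne_zero hm)
  have hmul : (t + m) * (s + m') = t * s + (t * m' + m * (s + m')) := by ring
  rw [hmul]
  refine add_mem (mem_sup_left (T.mul_mem ht hs)) (mem_sup_right (add_mem ?_ ?_))
  · rw [restrictScalars_mem, show j + 2 = 1 + (j + 1) by omega, pow_add, pow_one]
    exact Ideal.mul_mem_mul htI hm'
  · rw [restrictScalars_mem, show j + 2 = 2 + j by omega, pow_add]
    exact Ideal.mul_mem_mul hm hy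

theorem Subalgebra.eq_top_of_le_sup_sq (T : Subalgebra k R) {I : Ideal R} {N : ℕ} (hN : I ^ N = ⊥)
    (htop : ⊤ ≤ Subalgebra.toSubmodule T ⊔ I.restrictScalars k)
    (hI : I.restrictScalars k ≤ Subalgebra.toSubmodule T ⊔ (I ^ 2).restrictScalars k) :
    T = ⊤ := by
  have step : ∀ j, (I ^ j).restrictScalars k ≤
      Subalgebra.toSubmodule T ⊔ (I ^ (j + 1)).restrictScalars k := by
    intro j
    induction j with
    | zero => simpa using htop
    | succ j ih => exact T.pow_succ_le_sup_pow_succ hI ih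
  have approx : ∀ j, ⊤ ≤ Subalgebra.toSubmodule T ⊔ (I ^ j).restrictScalars k := by
    intro j
    induction j with
    | zero => simp
    | succ j ih => exact ih.trans (sup_le le_sup_left (step j))
  refine eq_top_iff.2 fun x _ => ?_
  simpa [hN] using approx N (mem_top (x := x))

end Nakayama

section Augmentation

open Submodule Set

variable {k R A : Type*} [Field k] [CommRing R] [Algebra k R] [CommRing A] [Algebra k A]

theorem Ideal.restrictScalars_span_le_span_sup_sq (s : Set R)
    (hR : ∀ r : R, ∃ c : k, r - algebraMap k R c ∈ Ideal.span s) :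
    (Ideal.span s).restrictScalars k ≤
      Submodule.span k s ⊔ (Ideal.span s ^ 2).restrictScalars k := by
  intro x hx
  induction hx using Submodule.span_induction with
  | mem x hx => exact Submodule.mem_sup_left (Submodule.subset_span hx)
  | zero => exact zero_mem _
  | add x y _ _ hx hy => exact add_mem hx hy
  | smul r x hxI hx =>
    obtain ⟨c, hc⟩ := hR r
    have hsplit : r • x = c • x + (r - algebraMap k R c) * x := by
      rw [smul_eq_mul, Algebra.smul_def]; ring
    rw [hsplit]
    exact add_mem (Submodule.smul_mem _ c hx)
      (Submodule.mem_sup_right (pow_two (Ideal.span s) ▸ Ideal.mul_mem_mul hc hxI))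

theorem Ideal.comap_nilradical_eq [Nontrivial A] {I : Ideal R} (hI : I ≤ nilradical R)
    (hR : ∀ r : R, ∃ c : k, r - algebraMap k R c ∈ I) (φ : R →ₐ[k] A) :
    (nilradical A).comap φ = I := by
  refine le_antisymm (fun x hx => ?_) fun x hx =>
    mem_nilradical.2 ((mem_nilradical.1 (hI hx)).map φ)
  obtain ⟨c, hc⟩ := hR x
  have hφc : IsNilpotent (algebraMap k A c) := by
    simpa using Commute.isNilpotent_sub (Commute.all _ _) (mem_nilradical.1 hx)
      ((mem_nilradical.1 (hI hc)).map φ)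
  have hc0 : c = 0 :=
    isNilpotent_iff_eq_zero.1 ((IsNilpotent.map_iff (algebraMap k A).injective).1 hφc)
  simpa [hc0] using hc

end Augmentation

section Lifting

open Submodule Set

variable {k R A ι : Type*} [Field k] [CommRing R] [Algebra k R] [CommRing A] [Algebra k A]
  {I : Ideal R} {α β : R →ₐ[k] A}

theorem Ideal.le_span_range_sup_sq_sup_ker (hα : Function.Surjective α)
    (hβ : Function.Surjective β) (hmap : I.map α = I.map β) {x v : ι → R}
    (hx : I.restrictScalars k ≤ Submodule.span k (range x) ⊔ (I ^ 2).restrictScalars k)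
    (hv : ∀ i, α (v i) = β (x i)) :
    I.restrictScalars k ≤
      Submodule.span k (range v) ⊔ (I ^ 2).restrictScalars k ⊔ LinearMap.ker α.toLinearMap := by
  have hmap_ideal : ∀ {φ : R →ₐ[k] A}, Function.Surjective φ → ∀ J : Ideal R,
      (J.restrictScalars k).map φ.toLinearMap = (J.map φ).restrictScalars k := fun hφ J => by
    ext z
    simp [Ideal.mem_map_iff_of_surjective _ hφ]
  have hαv : α.toLinearMap ∘ v = β.toLinearMap ∘ x := funext hv
  have key : (I.restrictScalars k).map α.toLinearMap ≤
      (Submodule.span k (range v) ⊔ (I ^ 2).restrictScalars k).map α.toLinearMap := by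
    calc (I.restrictScalars k).map α.toLinearMap
        = (I.restrictScalars k).map β.toLinearMap := by rw [hmap_ideal hα, hmap_ideal hβ, hmap]
      _ ≤ (Submodule.span k (range x) ⊔ (I ^ 2).restrictScalars k).map β.toLinearMap :=
        Submodule.map_mono hx
      _ = (Submodule.span k (range v) ⊔ (I ^ 2).restrictScalars k).map α.toLinearMap := by
        rw [Submodule.map_sup, Submodule.map_sup, Submodule.map_span, Submodule.map_span,
          ← range_comp, ← range_comp, hαv, hmap_ideal hα, hmap_ideal hβ, Ideal.map_pow,
          Ideal.map_pow, hmap]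
  rw [← Submodule.comap_map_eq]
  exact (Submodule.le_comap_map _ _).trans (Submodule.comap_mono key)

theorem Ideal.exists_lift_le_span_range_sup_sq [FiniteDimensional k R] [Fintype ι]
    (hα : Function.Surjective α) (hβ : Function.Surjective β) (hker : RingHom.ker α ≤ I)
    (hmap : I.map α = I.map β) {x : ι → R} (hxI : ∀ i, x i ∈ I)
    (hx : I.restrictScalars k ≤ Submodule.span k (range x) ⊔ (I ^ 2).restrictScalars k) :
    ∃ b : ι → R, (∀ i, b i ∈ I) ∧ (∀ i, α (b i) = β (x i)) ∧
      I.restrictScalars k ≤ Submodule.span k (range b) ⊔ (I ^ 2).restrictScalars k := by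
  choose v hvI hv using fun i =>
    (Ideal.mem_map_iff_of_surjective α hα).1 (hmap ▸ Ideal.mem_map_of_mem β (hxI i))
  obtain ⟨w, hwK, hw⟩ := exists_le_span_range_add_sup (fun z hz => hker hz) hx hvI
    (le_span_range_sup_sq_sup_ker hα hβ hmap hx hv)
  refine ⟨v + w, fun i => add_mem (hvI i) (hker (hwK i)), fun i => ?_, hw⟩
  simpa [hv] using hwK i

end Lifting

namespace Rnl

open MvPolynomial Submodule Set

variable {n ℓ : ℕ}

noncomputable def X (i : Fin n) : Rnl n ℓ := Ideal.Quotient.mk _ (MvPolynomial.X i)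

variable (n ℓ) in
noncomputable def maxIdeal : Ideal (Rnl n ℓ) := Ideal.span (range X)

theorem X_mem_maxIdeal (i : Fin n) : (X i : Rnl n ℓ) ∈ maxIdeal n ℓ :=
  Ideal.subset_span (mem_range_self i)

theorem maxIdeal_eq_map :
    maxIdeal n ℓ = (idealOfVars (Fin n) ℝ).map (Ideal.Quotient.mk _) := by
  rw [maxIdeal, idealOfVars, Ideal.map_span, ← range_comp]
  rfl

theorem maxIdeal_pow_eq_bot : maxIdeal n ℓ ^ (ℓ + 1) = ⊥ := by
  rw [maxIdeal_eq_map, ← Ideal.map_pow]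
  exact Ideal.map_quotient_self _

theorem maxIdeal_le_nilradical : maxIdeal n ℓ ≤ nilradical (Rnl n ℓ) := fun z hz =>
  ⟨ℓ + 1, by simpa [maxIdeal_pow_eq_bot] using Ideal.pow_mem_pow hz (ℓ + 1)⟩

theorem exists_sub_algebraMap_mem_maxIdeal (z : Rnl n ℓ) :
    ∃ c : ℝ, z - algebraMap ℝ _ c ∈ maxIdeal n ℓ := by
  obtain ⟨p, rfl⟩ := Ideal.Quotient.mk_surjective z
  refine ⟨constantCoeff p, ?_⟩
  have hp : p - C (constantCoeff p) ∈ idealOfVars (Fin n) ℝ := by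
    rw [← pow_one (idealOfVars _ _), mem_pow_idealOfVars_iff']
    intro x hx
    obtain rfl : x = 0 := (Finsupp.degree_eq_zero_iff x).1 (by omega)
    simp [constantCoeff_eq]
  rw [maxIdeal_eq_map, ← Ideal.Quotient.mk_algebraMap, algebraMap_eq, ← map_sub]
  exact Ideal.mem_map_of_mem _ hp

instance : Module.Finite ℝ (Rnl n ℓ) := by
  have : Algebra.IsIntegral ℝ (Rnl n ℓ) := ⟨fun z => by
    obtain ⟨c, hc⟩ := exists_sub_algebraMap_mem_maxIdeal z
    obtain ⟨N, hN⟩ := mem_nilradical.1 (maxIdeal_le_nilradical hc)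
    have hint : IsIntegral ℝ (z - algebraMap ℝ _ c) :=
      IsIntegral.of_pow N.succ_pos (by simpa [pow_succ, hN] using isIntegral_zero)
    simpa using (isIntegral_algebraMap (x := c)).add hint⟩
  exact Algebra.IsIntegral.finite

theorem maxIdeal_le_span_X_sup_sq :
    (maxIdeal n ℓ).restrictScalars ℝ ≤
      span ℝ (range X) ⊔ (maxIdeal n ℓ ^ 2).restrictScalars ℝ :=
  Ideal.restrictScalars_span_le_span_sup_sq _ exists_sub_algebraMap_mem_maxIdeal

variable {B : Type*} [CommRing B] [Algebra ℝ B]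

noncomputable def lift (b : Fin n → B) (hb : Ideal.span (range b) ^ (ℓ + 1) = ⊥) :
    Rnl n ℓ →ₐ[ℝ] B :=
  Ideal.Quotient.liftₐ _ (aeval b) fun p hp => by
    have := Ideal.mem_map_of_mem (aeval b) hp
    rwa [Ideal.map_pow, Ideal.map_span, ← range_comp, show ⇑(aeval b) ∘ MvPolynomial.X = b from
      funext fun i => aeval_X b i, hb, Ideal.mem_bot] at this

@[simp]
theorem lift_X (b : Fin n → B) (hb : Ideal.span (range b) ^ (ℓ + 1) = ⊥) (i : Fin n) :
    lift b hb (X i) = b i :=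
  (Ideal.Quotient.lift_mk _ _ _).trans (aeval_X b i)

theorem algHom_ext {f g : Rnl n ℓ →ₐ[ℝ] B} (h : ∀ i, f (X i) = g (X i)) : f = g :=
  Ideal.Quotient.algHom_ext _ (MvPolynomial.algHom_ext h)

theorem bijective_of_le_span_sup_sq (g : Rnl n ℓ →ₐ[ℝ] Rnl n ℓ)
    (hg : (maxIdeal n ℓ).restrictScalars ℝ ≤
      span ℝ (range (g ∘ X)) ⊔ (maxIdeal n ℓ ^ 2).restrictScalars ℝ) :
    Function.Bijective g := by
  have hspan : span ℝ (range (g ∘ X)) ≤ Subalgebra.toSubmodule g.range :=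
    span_le.2 (range_subset_iff.2 fun i => ⟨X i, rfl⟩)
  have hsurj : Function.Surjective g := by
    refine (AlgHom.range_eq_top g).1 <| g.range.eq_top_of_le_sup_sq maxIdeal_pow_eq_bot
      (fun z _ => ?_) (hg.trans (sup_le_sup_right hspan _))
    obtain ⟨c, hc⟩ := exists_sub_algebraMap_mem_maxIdeal z
    have hcT : algebraMap ℝ _ c ∈ Subalgebra.toSubmodule g.range := g.range.algebraMap_mem c
    have hcI : z - algebraMap ℝ _ c ∈ (maxIdeal n ℓ).restrictScalars ℝ := hc
    simpa using add_mem (mem_sup_left hcT) (mem_sup_right hcI)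
  exact ⟨(LinearMap.injective_iff_surjective (f := g.toLinearMap)).2 hsurj, hsurj⟩

end Rnl

theorem surjection_factors_through_automorphism_general
    (A : Type*) [CommRing A] [Algebra ℝ A] [IsLocalRing A]
    (ℓ n : ℕ)
    (α : Rnl n ℓ →ₐ[ℝ] A) (hα : Function.Surjective α)
    (β : Rnl n ℓ →ₐ[ℝ] A) (hβ : Function.Surjective β) :
    ∃ g : Rnl n ℓ ≃ₐ[ℝ] Rnl n ℓ, ∀ x, β x = α (g x) := by
  have hcomap : ∀ φ : Rnl n ℓ →ₐ[ℝ] A, (nilradical A).comap φ = Rnl.maxIdeal n ℓ :=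
    Ideal.comap_nilradical_eq Rnl.maxIdeal_le_nilradical Rnl.exists_sub_algebraMap_mem_maxIdeal
  have hmap_nil : ∀ φ : Rnl n ℓ →ₐ[ℝ] A, Function.Surjective φ →
      (Rnl.maxIdeal n ℓ).map φ = nilradical A :=
    fun φ hφ => hcomap φ ▸ Ideal.map_comap_of_surjective _ hφ _
  have hmap := (hmap_nil α hα).trans (hmap_nil β hβ).symm
  have hker : RingHom.ker α ≤ Rnl.maxIdeal n ℓ := hcomap α ▸ Ideal.comap_mono bot_le
  obtain ⟨b, hbI, hαb, hspan⟩ := Ideal.exists_lift_le_span_range_sup_sq hα hβ hker hmap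
    Rnl.X_mem_maxIdeal Rnl.maxIdeal_le_span_X_sup_sq
  have hb : Ideal.span (Set.range b) ^ (ℓ + 1) = ⊥ := le_bot_iff.1 <|
    Rnl.maxIdeal_pow_eq_bot ▸ Ideal.pow_right_mono (Ideal.span_le.2 (Set.range_subset_iff.2 hbI)) _
  let g := Rnl.lift b hb
  have hgX : g ∘ Rnl.X = b := funext (Rnl.lift_X b hb)
  refine ⟨AlgEquiv.ofBijective g (Rnl.bijective_of_le_span_sup_sq g (hgX ▸ hspan)), fun x => ?_⟩
  have hαg : α.comp g = β := Rnl.algHom_ext fun i => by simp [g, hαb]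
  exact (AlgHom.congr_fun hαg x).symm

/-- Given a fixed surjection `α : ℝ_n^ℓ → A` onto a Weil algebra of order `ℓ`
and width `m ≤ n`, every surjection `β : ℝ_n^ℓ → A` factors as `β = α ∘ g` for some
ℝ-algebra automorphism `g` of `ℝ_n^ℓ`. -/
theorem surjection_factors_through_automorphism
    (A : Type*) [CommRing A] [Algebra ℝ A] [IsLocalRing A] [FiniteDimensional ℝ A]
    (hres : Function.Bijective (algebraMap ℝ (ResidueField A)))
    (ℓ m n : ℕ)
    (horder : maximalIdeal A ^ (ℓ + 1) = ⊥)
    (horder_min : ∀ k : ℕ, k < ℓ → maximalIdeal A ^ (k + 1) ≠ ⊥)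
    (hwidth : m =
      Module.finrank ℝ
        ((Submodule.restrictScalars ℝ (maximalIdeal A)) ⧸
          (Submodule.comap (Submodule.restrictScalars ℝ (maximalIdeal A)).subtype
            (Submodule.restrictScalars ℝ (maximalIdeal A ^ 2)))))
    (hn : m ≤ n)
    (α : Rnl n ℓ →ₐ[ℝ] A) (hα : Function.Surjective α)
    (β : Rnl n ℓ →ₐ[ℝ] A) (hβ : Function.Surjective β) :
    ∃ g : Rnl n ℓ ≃ₐ[ℝ] Rnl n ℓ, ∀ x, β x = α (g x) :=
  surjection_factors_through_automorphism_general A ℓ n α hα β hβ
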